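/- Let A, B be positive definite n×n matrices, λ, t ∈ [0, 1]. For positive definite A, B, C, D: λ(A ♯_t C) + (1−λ)(B ♯_t D) ≤ (λA + (1−λ)B) ♯_t (λC + (1−λ)D), i.e., the weighted geometric mean is jointly concave. -/

import Mathlib

open Matrix
open scoped ComplexOrder

/-- Apply a real function to a Hermitian matrix via the spectral decomposition
(extended by the identity on non-Hermitian matrices). -/
noncomputable def mfun {n : ℕ} (f : ℝ → ℝ) (A : Matrix (Fin n) (Fin n) ℂ) :
    Matrix (Fin n) (Fin n) ℂ :=
  if h : A.IsHermitian then
    (h.eigenvectorUnitary : Matrix (Fin n) (Fin n) ℂ) *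
      Matrix.diagonal (fun i => (f (h.eigenvalues i) : ℂ)) *
      (h.eigenvectorUnitary : Matrix (Fin n) (Fin n) ℂ)ᴴ
  else A

/-- Real power of a (Hermitian) matrix. -/
noncomputable def mpow {n : ℕ} (A : Matrix (Fin n) (Fin n) ℂ) (t : ℝ) :
    Matrix (Fin n) (Fin n) ℂ :=
  mfun (fun x => x ^ t) A

/-- The weighted geometric mean `A ♯_t B = A^{1/2} (A^{-1/2} B A^{-1/2})^t A^{1/2}`. -/
noncomputable def gm {n : ℕ} (A B : Matrix (Fin n) (Fin n) ℂ) (t : ℝ) :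
    Matrix (Fin n) (Fin n) ℂ :=
  mpow A (1 / 2) * mpow (mpow A (-(1 / 2)) * B * mpow A (-(1 / 2))) t * mpow A (1 / 2)

open MeasureTheory Set

section AuxGM
variable {n : ℕ}

lemma mfun_eq {A : Matrix (Fin n) (Fin n) ℂ} (hA : A.IsHermitian) (f : ℝ → ℝ) :
    mfun f A = (hA.eigenvectorUnitary : Matrix (Fin n) (Fin n) ℂ) *
      Matrix.diagonal (fun i => (f (hA.eigenvalues i) : ℂ)) *
      (hA.eigenvectorUnitary : Matrix (Fin n) (Fin n) ℂ)ᴴ := by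
  rw [mfun, dif_pos hA]

lemma isHermitian_mfun {A : Matrix (Fin n) (Fin n) ℂ} (hA : A.IsHermitian) (f : ℝ → ℝ) :
    (mfun f A).IsHermitian := by
  rw [mfun_eq hA]
  apply isHermitian_mul_mul_conjTranspose
  exact isHermitian_diagonal_of_self_adjoint _ (by
    funext i
    simp [star, Complex.ext_iff])

lemma mfun_mul {A : Matrix (Fin n) (Fin n) ℂ} (hA : A.IsHermitian) (f g : ℝ → ℝ) :
    mfun f A * mfun g A = mfun (fun x => f x * g x) A := by
  rw [mfun_eq hA, mfun_eq hA, mfun_eq hA]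
  have hU : (hA.eigenvectorUnitary : Matrix (Fin n) (Fin n) ℂ)ᴴ *
      (hA.eigenvectorUnitary : Matrix (Fin n) (Fin n) ℂ) = 1 := by
    simpa [star_eq_conjTranspose] using
      ((Matrix.mem_unitaryGroup_iff').mp (hA.eigenvectorUnitary).2)
  calc _ = (hA.eigenvectorUnitary : Matrix (Fin n) (Fin n) ℂ) *
      (Matrix.diagonal (fun i => (f (hA.eigenvalues i) : ℂ)) *
        Matrix.diagonal (fun i => (g (hA.eigenvalues i) : ℂ))) *
      (hA.eigenvectorUnitary : Matrix (Fin n) (Fin n) ℂ)ᴴ := by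
        have hc : ∀ Y : Matrix (Fin n) (Fin n) ℂ,
            (hA.eigenvectorUnitary : Matrix (Fin n) (Fin n) ℂ)ᴴ *
              ((hA.eigenvectorUnitary : Matrix (Fin n) (Fin n) ℂ) * Y) = Y := fun Y => by
          rw [← Matrix.mul_assoc, hU, Matrix.one_mul]
        simp only [Matrix.mul_assoc, hc]
    _ = _ := by rw [diagonal_mul_diagonal]; push_cast; rfl

lemma mfun_add {A : Matrix (Fin n) (Fin n) ℂ} (hA : A.IsHermitian) (f g : ℝ → ℝ) :
    mfun f A + mfun g A = mfun (fun x => f x + g x) A := by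
  rw [mfun_eq hA, mfun_eq hA, mfun_eq hA, ← add_mul, ← mul_add, diagonal_add]
  push_cast
  rfl

lemma mfun_smul {A : Matrix (Fin n) (Fin n) ℂ} (hA : A.IsHermitian) (f : ℝ → ℝ) (r : ℝ) :
    (r : ℂ) • mfun f A = mfun (fun x => r * f x) A := by
  rw [mfun_eq hA, mfun_eq hA, ← smul_mul_assoc, ← mul_smul_comm]
  have : (r:ℂ) • (Matrix.diagonal fun i => (f (hA.eigenvalues i) : ℂ)) =
      Matrix.diagonal fun i => ((r * f (hA.eigenvalues i) : ℝ) : ℂ) := by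
    ext i j
    by_cases h : i = j <;> simp [Matrix.diagonal_apply, h]
  rw [this]

lemma mfun_congr {A : Matrix (Fin n) (Fin n) ℂ} (hA : A.IsHermitian) {f g : ℝ → ℝ}
    (h : ∀ i, f (hA.eigenvalues i) = g (hA.eigenvalues i)) : mfun f A = mfun g A := by
  rw [mfun_eq hA, mfun_eq hA]
  have : (fun i => (f (hA.eigenvalues i) : ℂ)) = fun i => (g (hA.eigenvalues i) : ℂ) := by
    funext i; rw [h i]
  rw [this]

lemma mfun_one {A : Matrix (Fin n) (Fin n) ℂ} (hA : A.IsHermitian) {f : ℝ → ℝ}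
    (h : ∀ i, f (hA.eigenvalues i) = 1) : mfun f A = 1 := by
  rw [mfun_eq hA]
  have : (Matrix.diagonal (fun i => (f (hA.eigenvalues i) : ℂ))) = 1 := by
    simp [h, Matrix.diagonal_one]
  rw [this, Matrix.mul_one]
  simpa [star_eq_conjTranspose] using ((Matrix.mem_unitaryGroup_iff).mp (hA.eigenvectorUnitary).2)

lemma mfun_id {A : Matrix (Fin n) (Fin n) ℂ} (hA : A.IsHermitian) {f : ℝ → ℝ}
    (h : ∀ i, f (hA.eigenvalues i) = hA.eigenvalues i) : mfun f A = A := by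
  rw [mfun_eq hA]
  conv_rhs => rw [hA.spectral_theorem]
  have : (fun i => (f (hA.eigenvalues i) : ℂ)) = Complex.ofReal ∘ hA.eigenvalues := by
    funext i; simp [h i]
  rw [this]
  rfl

lemma sandwich_mulVec {S M : Matrix (Fin n) (Fin n) ℂ} (hS : S.IsHermitian) (v : Fin n → ℂ) :
    star v ⬝ᵥ ((S * M * S) *ᵥ v) = star (S *ᵥ v) ⬝ᵥ (M *ᵥ (S *ᵥ v)) := by
  rw [← Matrix.mulVec_mulVec, ← Matrix.mulVec_mulVec, Matrix.dotProduct_mulVec _ S,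
    star_mulVec, hS.eq]

lemma isHermitian_sandwich {S M : Matrix (Fin n) (Fin n) ℂ} (hS : S.IsHermitian)
    (hM : M.IsHermitian) : (S * M * S).IsHermitian := by
  unfold Matrix.IsHermitian
  rw [Matrix.conjTranspose_mul, Matrix.conjTranspose_mul, hS.eq, hM.eq, Matrix.mul_assoc]

lemma quad_mfun {A : Matrix (Fin n) (Fin n) ℂ} (hA : A.IsHermitian) (f : ℝ → ℝ) (v : Fin n → ℂ) :
    star v ⬝ᵥ (mfun f A *ᵥ v) =
      ((∑ i, f (hA.eigenvalues i) *
        Complex.normSq (((hA.eigenvectorUnitary : Matrix (Fin n) (Fin n) ℂ)ᴴ *ᵥ v) i) : ℝ) : ℂ) := by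
  set U := (hA.eigenvectorUnitary : Matrix (Fin n) (Fin n) ℂ) with hU
  set w := Uᴴ *ᵥ v with hw
  have h1 : mfun f A *ᵥ v = U *ᵥ ((Matrix.diagonal fun i => (f (hA.eigenvalues i) : ℂ)) *ᵥ w) := by
    rw [mfun_eq hA, ← hU, hw, Matrix.mulVec_mulVec, Matrix.mulVec_mulVec]
  rw [h1, Matrix.dotProduct_mulVec _ U]
  have h2 : star v ᵥ* U = star w := by
    rw [hw, star_mulVec, Matrix.conjTranspose_conjTranspose]
  rw [h2]
  have h3 : ∀ i, ((Matrix.diagonal fun i => (f (hA.eigenvalues i) : ℂ)) *ᵥ w) i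
      = (f (hA.eigenvalues i) : ℂ) * w i := fun i => by
    rw [Matrix.mulVec_diagonal]
  rw [dotProduct]
  push_cast
  apply Finset.sum_congr rfl
  intro i _
  rw [h3 i, Pi.star_apply]
  rw [Complex.normSq_eq_conj_mul_self]
  simp only [Complex.star_def]
  ring

lemma posSemidef_mfun {A : Matrix (Fin n) (Fin n) ℂ} (hA : A.IsHermitian) {f : ℝ → ℝ}
    (hf : ∀ i, 0 ≤ f (hA.eigenvalues i)) : (mfun f A).PosSemidef := by
  refine posSemidef_iff_dotProduct_mulVec.mpr ⟨?_, ?_⟩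
  · exact isHermitian_mfun hA f
  · intro x
    rw [quad_mfun hA f x, Complex.zero_le_real]
    exact Finset.sum_nonneg fun i _ => mul_nonneg (hf i) (Complex.normSq_nonneg _)

lemma posDef_mfun {A : Matrix (Fin n) (Fin n) ℂ} (hA : A.IsHermitian) {f : ℝ → ℝ}
    (hf : ∀ i, 0 < f (hA.eigenvalues i)) : (mfun f A).PosDef := by
  refine posDef_iff_dotProduct_mulVec.mpr ⟨?_, ?_⟩
  · exact isHermitian_mfun hA f
  · intro x hx
    rw [quad_mfun hA f x]
    rw [show ((0:ℂ) = ((0:ℝ):ℂ)) from rfl, Complex.real_lt_real]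
    set U := (hA.eigenvectorUnitary : Matrix (Fin n) (Fin n) ℂ) with hU
    have hw : Uᴴ *ᵥ x ≠ 0 := by
      intro h
      apply hx
      have hinv : U * Uᴴ = 1 := by
        simpa [star_eq_conjTranspose] using ((Matrix.mem_unitaryGroup_iff).mp (hA.eigenvectorUnitary).2)
      have : (U * Uᴴ) *ᵥ x = U *ᵥ (Uᴴ *ᵥ x) := by rw [Matrix.mulVec_mulVec]
      rw [hinv, Matrix.one_mulVec, h, Matrix.mulVec_zero] at this
      exact this
    obtain ⟨j, hj⟩ := Function.ne_iff.mp hw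
    apply Finset.sum_pos' (fun i _ => mul_nonneg (hf i).le (Complex.normSq_nonneg _))
    exact ⟨j, Finset.mem_univ j, mul_pos (hf j) (by simpa [Complex.normSq_pos] using hj)⟩

section mpowlemmas
variable {A : Matrix (Fin n) (Fin n) ℂ} (hA : A.PosDef)
include hA

lemma mpow_posDef (t : ℝ) : (mpow A t).PosDef :=
  posDef_mfun hA.1 (fun i => Real.rpow_pos_of_pos (hA.eigenvalues_pos i) t)

lemma mpow_isHermitian (t : ℝ) : (mpow A t).IsHermitian := isHermitian_mfun hA.1 _

lemma mpow_mul_mpow (s t : ℝ) : mpow A s * mpow A t = mpow A (s + t) := by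
  unfold mpow
  rw [mfun_mul hA.1]
  exact mfun_congr hA.1 fun i => (Real.rpow_add (hA.eigenvalues_pos i) s t).symm

lemma mpow_zero' : mpow A 0 = 1 := mfun_one hA.1 fun i => Real.rpow_zero _

lemma mpow_one' : mpow A 1 = A := mfun_id hA.1 fun i => Real.rpow_one _

lemma mpow_half_half : mpow A (1/2) * mpow A (1/2) = A := by
  rw [mpow_mul_mpow hA]; norm_num; exact mpow_one' hA

lemma mpow_half_neg_half : mpow A (1/2) * mpow A (-(1/2)) = 1 := by
  rw [mpow_mul_mpow hA]; norm_num; exact mpow_zero' hA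

lemma mpow_neg_half_half : mpow A (-(1/2)) * mpow A (1/2) = 1 := by
  rw [mpow_mul_mpow hA]; norm_num; exact mpow_zero' hA

lemma mul_mpow_neg_one : A * mpow A (-1) = 1 := by
  have h := mpow_mul_mpow hA 1 (-1)
  rw [mpow_one' hA] at h
  rw [h]; norm_num; exact mpow_zero' hA

lemma mpow_neg_one_mul : mpow A (-1) * A = 1 := by
  have h := mpow_mul_mpow hA (-1) 1
  rw [mpow_one' hA] at h
  rw [h]; norm_num; exact mpow_zero' hA

end mpowlemmas

lemma posDef_sandwich {S B T : Matrix (Fin n) (Fin n) ℂ} (hS : S.IsHermitian) (hB : B.PosDef)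
    (hT : T * S = 1) : (S * B * S).PosDef := by
  refine posDef_iff_dotProduct_mulVec.mpr ⟨isHermitian_sandwich hS hB.1, fun x hx => ?_⟩
  rw [sandwich_mulVec hS]
  apply hB.dotProduct_mulVec_pos
  intro h
  apply hx
  have h2 : (T * S) *ᵥ x = T *ᵥ (S *ᵥ x) := (Matrix.mulVec_mulVec _ _ _).symm
  rw [hT, Matrix.one_mulVec, h, Matrix.mulVec_zero] at h2
  exact h2

section pair
variable {A B : Matrix (Fin n) (Fin n) ℂ} (hA : A.PosDef) (hB : B.PosDef)
include hA hB

lemma X_posDef : (mpow A (-(1/2)) * B * mpow A (-(1/2))).PosDef :=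
  posDef_sandwich (mpow_isHermitian hA _) hB (mpow_half_neg_half hA)

omit hB in
lemma B_eq_SXS : mpow A (1/2) * (mpow A (-(1/2)) * B * mpow A (-(1/2))) * mpow A (1/2) = B := by
  calc mpow A (1/2) * (mpow A (-(1/2)) * B * mpow A (-(1/2))) * mpow A (1/2)
      = (mpow A (1/2) * mpow A (-(1/2))) * B * (mpow A (-(1/2)) * mpow A (1/2)) := by
        simp only [Matrix.mul_assoc]
    _ = B := by rw [mpow_half_neg_half hA, mpow_neg_half_half hA, Matrix.one_mul, Matrix.mul_one]

end pair

lemma herm_cross {M : Matrix (Fin n) (Fin n) ℂ} (hM : M.IsHermitian) (x y : Fin n → ℂ) :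
    star x ⬝ᵥ (M *ᵥ y) = star (M *ᵥ x) ⬝ᵥ y := by
  rw [Matrix.dotProduct_mulVec, star_mulVec, hM.eq]

section pair2
variable {A B : Matrix (Fin n) (Fin n) ℂ} (hA : A.PosDef) (hB : B.PosDef)
include hA hB

lemma sandwich_qf (v : Fin n → ℂ) :
    ∃ c : Fin n → ℝ, (∀ i, 0 ≤ c i) ∧ ∀ f : ℝ → ℝ,
      star v ⬝ᵥ ((mpow A (1/2) * mfun f (mpow A (-(1/2)) * B * mpow A (-(1/2))) * mpow A (1/2)) *ᵥ v)
        = ((∑ i, c i * f ((X_posDef hA hB).1.eigenvalues i) : ℝ) : ℂ) := by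
  have hS := mpow_isHermitian hA (1/2)
  have hX := (X_posDef hA hB).1
  refine ⟨fun i => Complex.normSq (((hX.eigenvectorUnitary : Matrix (Fin n) (Fin n) ℂ)ᴴ *ᵥ
    (mpow A (1/2) *ᵥ v)) i), fun i => Complex.normSq_nonneg _, fun f => ?_⟩
  rw [sandwich_mulVec hS, quad_mfun hX f]
  congr 1
  exact Finset.sum_congr rfl fun i _ => mul_comm _ _

lemma mid (s : ℝ) (hs : 0 < s) :
    mpow A (-1) * (mpow A (1/2) * mfun (fun x => x / (x + s)) (mpow A (-(1/2)) * B * mpow A (-(1/2))) * mpow A (1/2))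
      + (s:ℂ) • (mpow B (-1) * (mpow A (1/2) * mfun (fun x => x / (x + s)) (mpow A (-(1/2)) * B * mpow A (-(1/2))) * mpow A (1/2))) = 1 := by
  set S := mpow A (1/2) with hSdef
  set S' := mpow A (-(1/2)) with hS'def
  set X := S' * B * S' with hXdef
  have hXpd : X.PosDef := X_posDef hA hB
  have hXh : X.IsHermitian := hXpd.1
  set G := mfun (fun x => x / (x + s)) X with hGdef
  set Xi := mfun (fun x => x⁻¹) X with hXidef
  have hSS' : S * S' = 1 := mpow_half_neg_half hA
  have hS'S : S' * S = 1 := mpow_neg_half_half hA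
  -- step a
  have ha : mpow A (-1) * S = S' := by
    rw [hSdef, hS'def, mpow_mul_mpow hA]; norm_num
  -- X * Xi = 1
  have hXXi : X * Xi = 1 := by
    have hid : X = mfun (fun x => x) X := (mfun_id hXh fun i => rfl).symm
    rw [hXidef]
    nth_rewrite 1 [hid]
    rw [mfun_mul hXh]
    exact mfun_one hXh fun i => mul_inv_cancel₀ (hXpd.eigenvalues_pos i).ne'
  -- step b
  have hBSXS : S * X * S = B := B_eq_SXS hA
  have hb : mpow B (-1) = S' * Xi * S' := by
    have h1 : B * (S' * Xi * S') = 1 := by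
      conv_lhs => rw [← hBSXS]
      calc S * X * S * (S' * Xi * S')
          = S * (X * ((S * S') * (Xi * S'))) := by simp only [Matrix.mul_assoc]
        _ = S * (X * Xi) * S' := by rw [hSS', Matrix.one_mul]; simp only [Matrix.mul_assoc]
        _ = 1 := by rw [hXXi, Matrix.mul_one, hSS']
    calc mpow B (-1) = mpow B (-1) * (B * (S' * Xi * S')) := by rw [h1, Matrix.mul_one]
      _ = (mpow B (-1) * B) * (S' * Xi * S') := by rw [← Matrix.mul_assoc]
      _ = S' * Xi * S' := by rw [mpow_neg_one_mul hB, Matrix.one_mul]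
  have hc : mpow A (-1) * (S * G * S) = S' * G * S := by
    calc mpow A (-1) * (S * G * S) = (mpow A (-1) * S) * G * S := by simp only [Matrix.mul_assoc]
      _ = S' * G * S := by rw [ha]
  have hd : mpow B (-1) * (S * G * S) = S' * (Xi * G) * S := by
    rw [hb]
    calc S' * Xi * S' * (S * G * S) = S' * (Xi * ((S' * S) * (G * S))) := by
          simp only [Matrix.mul_assoc]
      _ = S' * (Xi * G) * S := by rw [hS'S, Matrix.one_mul]; simp only [Matrix.mul_assoc]
  rw [hc, hd, ← smul_mul_assoc, ← mul_smul_comm]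
  have he : S' * G * S + S' * ((s:ℂ) • (Xi * G)) * S = S' * (G + (s:ℂ) • (Xi * G)) * S := by
    rw [Matrix.mul_add, Matrix.add_mul]
  rw [he]
  have hf : G + (s:ℂ) • (Xi * G) = 1 := by
    rw [hGdef, hXidef, mfun_mul hXh, mfun_smul hXh, mfun_add hXh]
    apply mfun_one hXh
    intro i
    have hx := hXpd.eigenvalues_pos i
    have hxs : hXh.eigenvalues i + s ≠ 0 := by positivity
    field_simp
  rw [hf, Matrix.mul_one, hS'S]

lemma Ks_isHermitian (s : ℝ) :
    (mpow A (1/2) * mfun (fun x => x / (x + s)) (mpow A (-(1/2)) * B * mpow A (-(1/2))) * mpow A (1/2)).IsHermitian :=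
  isHermitian_sandwich (mpow_isHermitian hA _) (isHermitian_mfun (X_posDef hA hB).1 _)

lemma harm_key (s : ℝ) (hs : 0 < s) (v : Fin n → ℂ) :
    ∃ u₀ : Fin n → ℂ, ∀ u : Fin n → ℂ,
      (star u ⬝ᵥ (A *ᵥ u)).re + s⁻¹ * (star (v - u) ⬝ᵥ (B *ᵥ (v - u))).re
        = (star v ⬝ᵥ ((mpow A (1/2) * mfun (fun x => x / (x + s)) (mpow A (-(1/2)) * B * mpow A (-(1/2))) * mpow A (1/2)) *ᵥ v)).re
          + (star (u - u₀) ⬝ᵥ (A *ᵥ (u - u₀))).re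
          + s⁻¹ * (star (u - u₀) ⬝ᵥ (B *ᵥ (u - u₀))).re := by
  set K := mpow A (1/2) * mfun (fun x => x / (x + s)) (mpow A (-(1/2)) * B * mpow A (-(1/2))) * mpow A (1/2) with hKdef
  set k := K *ᵥ v with hkdef
  set u₀ := mpow A (-1) *ᵥ k with hu₀def
  set w₀ := (s:ℂ) • (mpow B (-1) *ᵥ k) with hw₀def
  have hmid : mpow A (-1) * K + (s:ℂ) • (mpow B (-1) * K) = 1 := mid hA hB s hs
  have F1 : u₀ + w₀ = v := by
    have h1 : (mpow A (-1) * K + (s:ℂ) • (mpow B (-1) * K)) *ᵥ v = v := by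
      rw [hmid, Matrix.one_mulVec]
    calc u₀ + w₀ = (mpow A (-1) * K) *ᵥ v + ((s:ℂ) • (mpow B (-1) * K)) *ᵥ v := by
          rw [hu₀def, hw₀def, Matrix.mulVec_mulVec, Matrix.smul_mulVec,
            Matrix.mulVec_mulVec]
      _ = v := by rw [← Matrix.add_mulVec, h1]
  have F2 : A *ᵥ u₀ = k := by
    rw [hu₀def, Matrix.mulVec_mulVec, mul_mpow_neg_one hA, Matrix.one_mulVec]
  have F3 : B *ᵥ w₀ = (s:ℂ) • k := by
    rw [hw₀def, Matrix.mulVec_smul, Matrix.mulVec_mulVec, mul_mpow_neg_one hB,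
      Matrix.one_mulVec]
  refine ⟨u₀, fun u => ?_⟩
  set d := u - u₀ with hddef
  have hu : u = u₀ + d := by rw [hddef]; abel
  have hvu : v - u = w₀ - d := by rw [← F1, hddef]; abel
  have E1 : star u ⬝ᵥ (A *ᵥ u)
      = star u₀ ⬝ᵥ k + star k ⬝ᵥ d + star d ⬝ᵥ k + star d ⬝ᵥ (A *ᵥ d) := by
    rw [hu]
    rw [star_add, Matrix.mulVec_add, add_dotProduct, dotProduct_add,
      dotProduct_add, F2, herm_cross hA.1 u₀ d, F2]
    ring
  have E2 : star (v - u) ⬝ᵥ (B *ᵥ (v - u))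
      = (s:ℂ) * (star w₀ ⬝ᵥ k) - (s:ℂ) * (star k ⬝ᵥ d) - (s:ℂ) * (star d ⬝ᵥ k)
        + star d ⬝ᵥ (B *ᵥ d) := by
    rw [hvu, sub_eq_add_neg, star_add, Matrix.mulVec_add, add_dotProduct,
      dotProduct_add, dotProduct_add, F3]
    have h1 : star w₀ ⬝ᵥ ((s:ℂ) • k) = (s:ℂ) * (star w₀ ⬝ᵥ k) := by
      rw [dotProduct_smul, smul_eq_mul]
    have h2 : star w₀ ⬝ᵥ (B *ᵥ (-d)) = -((s:ℂ) * (star k ⬝ᵥ d)) := by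
      rw [herm_cross hB.1 w₀ (-d), F3, dotProduct_neg, star_smul,
        smul_dotProduct]
      simp [Complex.conj_ofReal]
    have h3 : star (-d) ⬝ᵥ ((s:ℂ) • k) = -((s:ℂ) * (star d ⬝ᵥ k)) := by
      rw [star_neg, neg_dotProduct, dotProduct_smul, smul_eq_mul]
    have h4 : star (-d) ⬝ᵥ (B *ᵥ (-d)) = star d ⬝ᵥ (B *ᵥ d) := by
      rw [star_neg, Matrix.mulVec_neg, neg_dotProduct, dotProduct_neg, neg_neg]
    rw [h1, h2, h3, h4]
    ring
  have E3 : star v ⬝ᵥ k = star u₀ ⬝ᵥ k + star w₀ ⬝ᵥ k := by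
    rw [← F1, star_add, add_dotProduct]
  rw [E1, E2]
  have hk : (star v ⬝ᵥ (K *ᵥ v)).re = (star u₀ ⬝ᵥ k).re + (star w₀ ⬝ᵥ k).re := by
    rw [← hkdef, E3, Complex.add_re]
  rw [hk]
  simp only [Complex.add_re, Complex.sub_re]
  have hre : ∀ z : ℂ, ((s:ℂ) * z).re = s * z.re := by
    intro z
    simp [Complex.mul_re]
  rw [hre, hre, hre]
  field_simp
  ring


end pair2

section integral
variable {t : ℝ}

lemma cont_phi {μ : ℝ} (hμ : 0 < μ) :
    ContinuousOn (fun s : ℝ => s ^ (t-1) * (μ / (μ + s))) (Ioi 0) := by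
  intro x hx
  have hx0 : (0:ℝ) < x := hx
  apply ContinuousAt.continuousWithinAt
  apply ContinuousAt.mul
  · exact Real.continuousAt_rpow_const x (t-1) (Or.inl hx0.ne')
  · exact (continuousAt_const.div (continuousAt_const.add continuousAt_id)
      (by positivity))

lemma integrable_phi (ht0 : 0 < t) (ht1 : t < 1) {μ : ℝ} (hμ : 0 < μ) :
    IntegrableOn (fun s : ℝ => s ^ (t-1) * (μ / (μ + s))) (Ioi 0) := by
  have hIoc : IntegrableOn (fun s : ℝ => s ^ (t-1) * (μ / (μ + s))) (Ioc 0 1) := by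
    have hb : IntegrableOn (fun s : ℝ => s ^ (t-1)) (Ioc (0:ℝ) 1) := by
      rw [← intervalIntegrable_iff_integrableOn_Ioc_of_le zero_le_one]
      exact intervalIntegral.intervalIntegrable_rpow' (by linarith)
    apply Integrable.mono' hb
    · exact ((cont_phi hμ).mono Ioc_subset_Ioi_self).aestronglyMeasurable measurableSet_Ioc
    · filter_upwards [ae_restrict_mem measurableSet_Ioc] with x hx
      have hx0 : (0:ℝ) < x := hx.1
      have h1 : 0 ≤ μ / (μ + x) := by positivity
      have h2 : μ / (μ + x) ≤ 1 := by
        rw [div_le_one (by positivity)]; linarith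
      rw [Real.norm_eq_abs, abs_mul, abs_of_nonneg (Real.rpow_nonneg hx0.le _),
        abs_of_nonneg h1]
      nlinarith [Real.rpow_pos_of_pos hx0 (t-1)]
  have hIoi : IntegrableOn (fun s : ℝ => s ^ (t-1) * (μ / (μ + s))) (Ioi 1) := by
    have hb : IntegrableOn (fun s : ℝ => μ * s ^ (t-2)) (Ioi (1:ℝ)) :=
      (integrableOn_Ioi_rpow_of_lt (by linarith) one_pos).const_mul μ
    apply Integrable.mono' hb
    · exact ((cont_phi hμ).mono fun x (hx : x ∈ Ioi (1:ℝ)) => show (0:ℝ) < x from lt_trans one_pos hx).aestronglyMeasurable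
        measurableSet_Ioi
    · filter_upwards [ae_restrict_mem measurableSet_Ioi] with x hx
      have hx1 : (1:ℝ) < x := hx
      have hx0 : (0:ℝ) < x := lt_trans one_pos hx1
      have h1 : 0 ≤ μ / (μ + x) := by positivity
      rw [Real.norm_eq_abs, abs_mul, abs_of_nonneg (Real.rpow_nonneg hx0.le _),
        abs_of_nonneg h1]
      have h2 : μ / (μ + x) ≤ μ / x := by
        apply div_le_div_of_nonneg_left hμ.le hx0
        linarith
      have h4 : x ^ (t-1) * x⁻¹ = x ^ (t-2) := by
        rw [← Real.rpow_neg_one x, ← Real.rpow_add hx0]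
        congr 1
        ring
      have h3 : x ^ (t-1) * (μ / x) = μ * x ^ (t-2) := by
        calc x ^ (t-1) * (μ / x) = μ * (x ^ (t-1) * x⁻¹) := by ring
          _ = μ * x ^ (t-2) := by rw [h4]
      calc x ^ (t-1) * (μ / (μ + x)) ≤ x ^ (t-1) * (μ / x) := by
            apply mul_le_mul_of_nonneg_left h2 (Real.rpow_nonneg hx0.le _)
        _ = μ * x ^ (t-2) := h3
  have hunion : Ioc (0:ℝ) 1 ∪ Ioi 1 = Ioi 0 := Ioc_union_Ioi_eq_Ioi zero_le_one
  rw [← hunion]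
  exact hIoc.union hIoi

lemma J_scale (ht0 : 0 < t) (ht1 : t < 1) {μ : ℝ} (hμ : 0 < μ) :
    ∫ s in Ioi (0:ℝ), s ^ (t-1) * (μ / (μ + s))
      = μ ^ t * ∫ s in Ioi (0:ℝ), s ^ (t-1) * (1 / (1 + s)) := by
  have h := integral_comp_mul_left_Ioi (fun s : ℝ => s ^ (t-1) * (μ / (μ + s))) 0 hμ
  rw [mul_zero] at h
  have h2 : ∫ x in Ioi (0:ℝ), (μ * x) ^ (t-1) * (μ / (μ + μ * x))
      = ∫ x in Ioi (0:ℝ), μ ^ (t-1) * (x ^ (t-1) * (1 / (1 + x))) := by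
    apply setIntegral_congr_fun measurableSet_Ioi
    intro x hx
    have hx0 : (0:ℝ) < x := hx
    show (μ * x) ^ (t-1) * (μ / (μ + μ * x)) = μ ^ (t-1) * (x ^ (t-1) * (1 / (1 + x)))
    rw [Real.mul_rpow hμ.le hx0.le]
    have : μ / (μ + μ * x) = 1 / (1 + x) := by
      rw [show μ + μ * x = μ * (1 + x) by ring]
      rw [div_eq_div_iff (by positivity) (by positivity)]
      ring
    rw [this]
    ring
  rw [h2, MeasureTheory.integral_const_mul] at h
  have := h.symm
  rw [smul_eq_mul] at this
  have hμt : μ * (μ ^ (t-1) * ∫ x in Ioi (0:ℝ), x ^ (t-1) * (1 / (1 + x)))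
      = μ ^ t * ∫ x in Ioi (0:ℝ), x ^ (t-1) * (1 / (1 + x)) := by
    rw [← mul_assoc]
    congr 1
    rw [show μ * μ ^ (t-1) = μ ^ (1:ℝ) * μ ^ (t-1) by rw [Real.rpow_one],
      ← Real.rpow_add hμ]
    norm_num
  calc ∫ s in Ioi (0:ℝ), s ^ (t-1) * (μ / (μ + s))
      = μ * (μ⁻¹ * ∫ s in Ioi (0:ℝ), s ^ (t-1) * (μ / (μ + s))) := by
        rw [← mul_assoc, mul_inv_cancel₀ hμ.ne', one_mul]
    _ = μ * (μ ^ (t-1) * ∫ x in Ioi (0:ℝ), x ^ (t-1) * (1 / (1 + x))) := by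
        rw [← smul_eq_mul (a := μ⁻¹), ← h]
    _ = _ := hμt

lemma J1_pos (ht0 : 0 < t) (ht1 : t < 1) :
    0 < ∫ s in Ioi (0:ℝ), s ^ (t-1) * (1 / (1 + s)) := by
  rw [setIntegral_pos_iff_support_of_nonneg_ae]
  · have hsub : Ioi (0:ℝ) ⊆
        (Function.support fun s : ℝ => s ^ (t-1) * (1 / (1 + s))) ∩ Ioi 0 := by
      intro x hx
      have hx0 : (0:ℝ) < x := hx
      refine ⟨?_, hx⟩
      have hpos : (0:ℝ) < x ^ (t-1) * (1 / (1 + x)) := by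
        apply mul_pos (Real.rpow_pos_of_pos hx0 _)
        positivity
      exact hpos.ne'
    calc (0:ENNReal) < volume (Ioi (0:ℝ)) := by rw [Real.volume_Ioi]; exact ENNReal.zero_lt_top
      _ ≤ _ := measure_mono hsub
  · filter_upwards [ae_restrict_mem measurableSet_Ioi] with x hx
    have hx0 : (0:ℝ) < x := hx
    positivity
  · exact integrable_phi ht0 ht1 one_pos
end integral

section final
variable {A B : Matrix (Fin n) (Fin n) ℂ}

lemma herm_qf_real {M : Matrix (Fin n) (Fin n) ℂ} (hM : M.IsHermitian) (v : Fin n → ℂ) :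
    star v ⬝ᵥ (M *ᵥ v) = (((star v ⬝ᵥ (M *ᵥ v)).re : ℝ) : ℂ) := by
  have h := herm_cross hM v v
  have hconj : (starRingEnd ℂ) (star v ⬝ᵥ (M *ᵥ v)) = star v ⬝ᵥ (M *ᵥ v) := by
    have h1 : (starRingEnd ℂ) (star v ⬝ᵥ (M *ᵥ v)) = star (M *ᵥ v) ⬝ᵥ star (star v) := by
      rw [Matrix.star_dotProduct_star]
      rfl
    rw [h1, star_star, h]
  exact (Complex.conj_eq_iff_re.mp hconj).symm

lemma posDef_ofReal_smul (hA : A.PosDef) {r : ℝ} (hr : 0 < r) : ((r:ℂ) • A).PosDef := by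
  refine posDef_iff_dotProduct_mulVec.mpr ⟨?_, ?_⟩
  · show ((r:ℂ) • A)ᴴ = (r:ℂ) • A
    rw [Matrix.conjTranspose_smul, hA.1.eq]
    congr 1
    exact Complex.conj_ofReal r
  · intro x hx
    rw [Matrix.smul_mulVec, dotProduct_smul, smul_eq_mul]
    exact mul_pos (Complex.zero_lt_real.mpr hr) (hA.dotProduct_mulVec_pos hx)

lemma posDef_combo (hA : A.PosDef) (hB : B.PosDef) {lam : ℝ} (h0 : 0 ≤ lam) (h1 : lam ≤ 1) :
    ((lam:ℂ) • A + ((1-lam:ℝ):ℂ) • B).PosDef := by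
  rcases eq_or_lt_of_le h0 with h|h
  · have he : ((lam:ℂ) • A + ((1-lam:ℝ):ℂ) • B) = B := by
      rw [← h]; simp
    rw [he]; exact hB
  · rcases eq_or_lt_of_le h1 with h2|h2
    · have he : ((lam:ℂ) • A + ((1-lam:ℝ):ℂ) • B) = A := by
        rw [h2]; simp
      rw [he]; exact hA
    · exact (posDef_ofReal_smul hA h).add (posDef_ofReal_smul hB (by linarith))

lemma gm_isHermitian (hA : A.PosDef) (hB : B.PosDef) (t : ℝ) : (gm A B t).IsHermitian :=
  isHermitian_sandwich (mpow_isHermitian hA _) (mpow_isHermitian (X_posDef hA hB) t)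

lemma gm_zero (hA : A.PosDef) (hB : B.PosDef) : gm A B 0 = A := by
  show mpow A (1/2) * mpow (mpow A (-(1/2)) * B * mpow A (-(1/2))) 0 * mpow A (1/2) = A
  rw [mpow_zero' (X_posDef hA hB), Matrix.mul_one, mpow_half_half hA]

lemma gm_one (hA : A.PosDef) (hB : B.PosDef) : gm A B 1 = B := by
  show mpow A (1/2) * mpow (mpow A (-(1/2)) * B * mpow A (-(1/2))) 1 * mpow A (1/2) = B
  rw [mpow_one' (X_posDef hA hB)]
  exact B_eq_SXS hA

lemma pair_main (hA : A.PosDef) (hB : B.PosDef) {t : ℝ} (ht0 : 0 < t) (ht1 : t < 1)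
    (v : Fin n → ℂ) :
    ∃ F : ℝ → ℝ, IntegrableOn F (Ioi 0) volume ∧
      (∀ s : ℝ, 0 < s → F s = s ^ (t-1) *
        (star v ⬝ᵥ ((mpow A (1/2) * mfun (fun x => x / (x + s)) (mpow A (-(1/2)) * B * mpow A (-(1/2))) * mpow A (1/2)) *ᵥ v)).re) ∧
      ∫ s in Ioi (0:ℝ), F s
        = (∫ s in Ioi (0:ℝ), s ^ (t-1) * (1 / (1 + s))) * (star v ⬝ᵥ (gm A B t *ᵥ v)).re := by
  obtain ⟨c, hc, hqf⟩ := sandwich_qf hA hB v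
  set m := (X_posDef hA hB).1.eigenvalues with hm
  have hmpos : ∀ i, 0 < m i := fun i => (X_posDef hA hB).eigenvalues_pos i
  refine ⟨fun s => ∑ i, c i * (s ^ (t-1) * (m i / (m i + s))), ?_, ?_, ?_⟩
  · apply MeasureTheory.integrable_finset_sum
    intro i _
    exact ((integrable_phi ht0 ht1 (hmpos i)).const_mul (c i))
  · intro s hs
    rw [hqf (fun x => x / (x + s)), Complex.ofReal_re, Finset.mul_sum]
    apply Finset.sum_congr rfl; intro i _; ring
  · have hint : ∫ s in Ioi (0:ℝ), ∑ i, c i * (s ^ (t-1) * (m i / (m i + s)))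
        = ∑ i, c i * (m i ^ t * ∫ s in Ioi (0:ℝ), s ^ (t-1) * (1/(1+s))) := by
      rw [MeasureTheory.integral_finset_sum]
      · apply Finset.sum_congr rfl
        intro i _
        rw [MeasureTheory.integral_const_mul, J_scale ht0 ht1 (hmpos i)]
      · intro i _
        exact ((integrable_phi ht0 ht1 (hmpos i)).const_mul (c i))
    rw [hint]
    have hgm : (star v ⬝ᵥ (gm A B t *ᵥ v)).re = ∑ i, c i * m i ^ t := by
      rw [show gm A B t = mpow A (1/2) * mfun (fun x => x ^ t)
          (mpow A (-(1/2)) * B * mpow A (-(1/2))) * mpow A (1/2) from rfl,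
        hqf (fun x => x ^ t), Complex.ofReal_re]
    rw [hgm, Finset.mul_sum]
    apply Finset.sum_congr rfl; intro i _; ring

end final

section assemble
variable {P Q : Matrix (Fin n) (Fin n) ℂ}

lemma qf_combo (P Q : Matrix (Fin n) (Fin n) ℂ) (lam : ℝ) (u : Fin n → ℂ) :
    (star u ⬝ᵥ ((((lam:ℂ) • P + ((1-lam:ℝ):ℂ) • Q)) *ᵥ u)).re
      = lam * (star u ⬝ᵥ (P *ᵥ u)).re + (1-lam) * (star u ⬝ᵥ (Q *ᵥ u)).re := by
  rw [Matrix.add_mulVec, Matrix.smul_mulVec, Matrix.smul_mulVec,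
    dotProduct_add, dotProduct_smul, dotProduct_smul, Complex.add_re]
  simp [smul_eq_mul, Complex.mul_re, Complex.ofReal_re, Complex.ofReal_im]

lemma psd_re_nonneg (hP : P.PosSemidef) (d : Fin n → ℂ) :
    0 ≤ (star d ⬝ᵥ (P *ᵥ d)).re := by
  have := hP.re_dotProduct_nonneg d
  simpa using this

lemma herm_smul_real (hP : P.IsHermitian) (r : ℝ) : ((r:ℂ) • P).IsHermitian := by
  show ((r:ℂ) • P)ᴴ = (r:ℂ) • P
  rw [Matrix.conjTranspose_smul, hP.eq]
  congr 1
  exact Complex.conj_ofReal r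

theorem geom_mean_jointly_concave' (A B C D : Matrix (Fin n) (Fin n) ℂ)
    (hA : A.PosDef) (hB : B.PosDef) (hC : C.PosDef) (hD : D.PosDef)
    (t lam : ℝ) (ht : t ∈ Set.Icc (0 : ℝ) 1) (hlam : lam ∈ Set.Icc (0 : ℝ) 1) :
    (gm ((lam : ℂ) • A + ((1 - lam : ℝ) : ℂ) • B) ((lam : ℂ) • C + ((1 - lam : ℝ) : ℂ) • D) t -
      ((lam : ℂ) • gm A C t + ((1 - lam : ℝ) : ℂ) • gm B D t)).PosSemidef := by
  obtain ⟨hl0, hl1⟩ := hlam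
  obtain ⟨ht0, ht1⟩ := ht
  have hA' : ((lam:ℂ) • A + ((1-lam:ℝ):ℂ) • B).PosDef := posDef_combo hA hB hl0 hl1
  have hC' : ((lam:ℂ) • C + ((1-lam:ℝ):ℂ) • D).PosDef := posDef_combo hC hD hl0 hl1
  -- edge case lam = 0
  rcases eq_or_lt_of_le hl0 with h|hl0'
  · have e0 : ((lam:ℂ)) = 0 := by rw [← h]; simp
    have e1 : (((1-lam:ℝ)):ℂ) = 1 := by rw [← h]; simp
    rw [e0, e1]
    simp only [zero_smul, zero_add, one_smul, sub_self]
    exact Matrix.PosSemidef.zero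
  rcases eq_or_lt_of_le hl1 with h|hl1'
  · have e0 : ((lam:ℂ)) = 1 := by rw [h]; simp
    have e1 : (((1-lam:ℝ)):ℂ) = 0 := by rw [h]; simp
    rw [e0, e1]
    simp only [zero_smul, one_smul, add_zero, sub_self]
    exact Matrix.PosSemidef.zero
  -- edge case t = 0
  rcases eq_or_lt_of_le ht0 with h|ht0'
  · rw [← h, gm_zero hA' hC', gm_zero hA hC, gm_zero hB hD, sub_self]
    exact Matrix.PosSemidef.zero
  rcases eq_or_lt_of_le ht1 with h|ht1'
  · rw [h, gm_one hA' hC', gm_one hA hC, gm_one hB hD, sub_self]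
    exact Matrix.PosSemidef.zero
  -- main case
  have hherm : (gm ((lam:ℂ) • A + ((1-lam:ℝ):ℂ) • B) ((lam:ℂ) • C + ((1-lam:ℝ):ℂ) • D) t -
      ((lam:ℂ) • gm A C t + ((1-lam:ℝ):ℂ) • gm B D t)).IsHermitian :=
    ((gm_isHermitian hA' hC' t).sub
      ((herm_smul_real (gm_isHermitian hA hC t) lam).add
        (herm_smul_real (gm_isHermitian hB hD t) (1-lam))))
  refine posSemidef_iff_dotProduct_mulVec.mpr ⟨hherm, fun v => ?_⟩
  rw [herm_qf_real hherm v, Complex.zero_le_real]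
  -- split the quadratic form
  have hsplit : (star v ⬝ᵥ ((gm ((lam:ℂ) • A + ((1-lam:ℝ):ℂ) • B)
        ((lam:ℂ) • C + ((1-lam:ℝ):ℂ) • D) t -
        ((lam:ℂ) • gm A C t + ((1-lam:ℝ):ℂ) • gm B D t)) *ᵥ v)).re
      = (star v ⬝ᵥ (gm ((lam:ℂ) • A + ((1-lam:ℝ):ℂ) • B)
          ((lam:ℂ) • C + ((1-lam:ℝ):ℂ) • D) t *ᵥ v)).re
        - (lam * (star v ⬝ᵥ (gm A C t *ᵥ v)).re
          + (1-lam) * (star v ⬝ᵥ (gm B D t *ᵥ v)).re) := by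
    rw [Matrix.sub_mulVec, dotProduct_sub, Complex.sub_re]
    congr 1
    rw [Matrix.add_mulVec, Matrix.smul_mulVec, Matrix.smul_mulVec,
      dotProduct_add, dotProduct_smul, dotProduct_smul, Complex.add_re]
    simp [smul_eq_mul, Complex.mul_re, Complex.ofReal_re, Complex.ofReal_im]
  rw [hsplit]
  -- the three integral representations
  obtain ⟨F₁, hF₁int, hF₁rep, hF₁val⟩ := pair_main hA hC ht0' ht1' v
  obtain ⟨F₂, hF₂int, hF₂rep, hF₂val⟩ := pair_main hB hD ht0' ht1' v
  obtain ⟨F₃, hF₃int, hF₃rep, hF₃val⟩ := pair_main hA' hC' ht0' ht1' v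
  set J1 := ∫ s in Ioi (0:ℝ), s ^ (t-1) * (1 / (1 + s)) with hJ1
  have hJ1pos : 0 < J1 := J1_pos ht0' ht1'
  -- pointwise inequality
  have hptwise : ∀ x ∈ Ioi (0:ℝ), lam * F₁ x + (1-lam) * F₂ x ≤ F₃ x := by
    intro x hx
    have hx0 : (0:ℝ) < x := hx
    rw [hF₁rep x hx0, hF₂rep x hx0, hF₃rep x hx0]
    set r1 := (star v ⬝ᵥ ((mpow A (1/2) * mfun (fun y => y / (y + x))
      (mpow A (-(1/2)) * C * mpow A (-(1/2))) * mpow A (1/2)) *ᵥ v)).re with hr1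
    set r2 := (star v ⬝ᵥ ((mpow B (1/2) * mfun (fun y => y / (y + x))
      (mpow B (-(1/2)) * D * mpow B (-(1/2))) * mpow B (1/2)) *ᵥ v)).re with hr2
    have hcore : lam * r1 + (1-lam) * r2
        ≤ (star v ⬝ᵥ ((mpow ((lam:ℂ) • A + ((1-lam:ℝ):ℂ) • B) (1/2) *
            mfun (fun y => y / (y + x))
            (mpow ((lam:ℂ) • A + ((1-lam:ℝ):ℂ) • B) (-(1/2)) *
              ((lam:ℂ) • C + ((1-lam:ℝ):ℂ) • D) *
              mpow ((lam:ℂ) • A + ((1-lam:ℝ):ℂ) • B) (-(1/2))) *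
            mpow ((lam:ℂ) • A + ((1-lam:ℝ):ℂ) • B) (1/2)) *ᵥ v)).re := by
      obtain ⟨u₀, hu₃⟩ := harm_key hA' hC' x hx0 v
      have h3 := hu₃ u₀
      rw [sub_self] at h3
      simp only [star_zero, zero_dotProduct, Complex.zero_re, add_zero, mul_zero] at h3
      obtain ⟨u₁, hu₁⟩ := harm_key hA hC x hx0 v
      obtain ⟨u₂, hu₂⟩ := harm_key hB hD x hx0 v
      have hp1 : r1 ≤ (star u₀ ⬝ᵥ (A *ᵥ u₀)).re
          + x⁻¹ * (star (v - u₀) ⬝ᵥ (C *ᵥ (v - u₀))).re := by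
        rw [hu₁ u₀, ← hr1]
        have n1 := psd_re_nonneg hA.posSemidef (u₀ - u₁)
        have n2 := psd_re_nonneg hC.posSemidef (u₀ - u₁)
        have hxinv : 0 < x⁻¹ := inv_pos.mpr hx0
        nlinarith
      have hp2 : r2 ≤ (star u₀ ⬝ᵥ (B *ᵥ u₀)).re
          + x⁻¹ * (star (v - u₀) ⬝ᵥ (D *ᵥ (v - u₀))).re := by
        rw [hu₂ u₀, ← hr2]
        have n1 := psd_re_nonneg hB.posSemidef (u₀ - u₂)
        have n2 := psd_re_nonneg hD.posSemidef (u₀ - u₂)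
        have hxinv : 0 < x⁻¹ := inv_pos.mpr hx0
        nlinarith
      have hlin1 := qf_combo A B lam u₀
      have hlin2 := qf_combo C D lam (v - u₀)
      have hgoal := h3
      rw [hlin1, hlin2] at hgoal
      have e1 := mul_le_mul_of_nonneg_left hp1 hl0
      have e2 := mul_le_mul_of_nonneg_left hp2 (by linarith : (0:ℝ) ≤ 1 - lam)
      have hxinv : 0 < x⁻¹ := inv_pos.mpr hx0
      nlinarith
    have hxt : 0 ≤ x ^ (t-1) := Real.rpow_nonneg hx0.le _
    calc lam * (x ^ (t-1) * r1) + (1-lam) * (x ^ (t-1) * r2)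
        = x ^ (t-1) * (lam * r1 + (1-lam) * r2) := by ring
      _ ≤ x ^ (t-1) * _ := mul_le_mul_of_nonneg_left hcore hxt
  -- integrate
  have hquadint : IntegrableOn (fun x => lam * F₁ x + (1-lam) * F₂ x) (Ioi 0) volume :=
    (hF₁int.const_mul lam).add (hF₂int.const_mul (1-lam))
  have hmono : ∫ x in Ioi (0:ℝ), (lam * F₁ x + (1-lam) * F₂ x) ≤ ∫ x in Ioi (0:ℝ), F₃ x :=
    setIntegral_mono_on hquadint hF₃int measurableSet_Ioi hptwise
  have hlhs : ∫ x in Ioi (0:ℝ), (lam * F₁ x + (1-lam) * F₂ x)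
      = lam * (J1 * (star v ⬝ᵥ (gm A C t *ᵥ v)).re)
        + (1-lam) * (J1 * (star v ⬝ᵥ (gm B D t *ᵥ v)).re) := by
    rw [MeasureTheory.integral_add (hF₁int.const_mul lam) (hF₂int.const_mul (1-lam)),
      MeasureTheory.integral_const_mul, MeasureTheory.integral_const_mul, hF₁val, hF₂val]
  rw [hlhs, hF₃val] at hmono
  have : lam * (star v ⬝ᵥ (gm A C t *ᵥ v)).re + (1-lam) * (star v ⬝ᵥ (gm B D t *ᵥ v)).re
      ≤ (star v ⬝ᵥ (gm ((lam:ℂ) • A + ((1-lam:ℝ):ℂ) • B)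
          ((lam:ℂ) • C + ((1-lam:ℝ):ℂ) • D) t *ᵥ v)).re := by
    nlinarith
  linarith

end assemble

end AuxGM

theorem geom_mean_jointly_concave {n : ℕ} (A B C D : Matrix (Fin n) (Fin n) ℂ)
    (hA : A.PosDef) (hB : B.PosDef) (hC : C.PosDef) (hD : D.PosDef)
    (t lam : ℝ) (ht : t ∈ Set.Icc (0 : ℝ) 1) (hlam : lam ∈ Set.Icc (0 : ℝ) 1) :
    (gm ((lam : ℂ) • A + ((1 - lam : ℝ) : ℂ) • B) ((lam : ℂ) • C + ((1 - lam : ℝ) : ℂ) • D) t -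
      ((lam : ℂ) • gm A C t + ((1 - lam : ℝ) : ℂ) • gm B D t)).PosSemidef := geom_mean_jointly_concave' A B C D hA hB hC hD t lam ht hlam
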